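/- arXiv:1904.04326 — 2 statements merged into one kernel-verified Lean document; each statement's English description precedes it below -/
import Mathlib

section
/- Under gradient flow on a convex differentiable F : ℝᵐ → ℝ ≥ 0 with a'(t) = -∇F(a(t)), for any a* and t ≥ 0: ‖a(t) - a*‖² ≤ 2t F(a*) + ‖a(0) - a*‖². -/
/-!
Along the flow `a' = -∇F(a)`, the Lyapunov function `J t = t (F (a t) - F a*) + ½ ‖a t - a*‖²`
has derivative `F(a) - F(a*) - ⟪∇F(a), a - a*⟫ - t ‖∇F(a)‖²`, which is nonpositive for `t ≥ 0`
by the first-order characterisation of convexity. Hence `J t ≤ J 0 = ½ ‖a 0 - a*‖²`, and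
`F (a t) ≥ 0` turns this into the bound on `‖a t - a*‖²`.
-/

open InnerProductSpace Set
open scoped Gradient

variable {E : Type*} [NormedAddCommGroup E] [InnerProductSpace ℝ E] [CompleteSpace E]

theorem HasGradientAt.comp_hasDerivAt {f : E → ℝ} {g : E} {a : ℝ → E} {v : E} {t : ℝ}
    (hf : HasGradientAt f g (a t)) (ha : HasDerivAt a v t) :
    HasDerivAt (fun s => f (a s)) ⟪g, v⟫_ℝ t := by
  have h := (hasGradientAt_iff_hasFDerivAt.mp hf).comp_hasDerivAt t ha
  rwa [toDual_apply_apply] at h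

theorem ConvexOn.inner_sub_le_of_hasGradientAt {s : Set E} {f : E → ℝ} {g x y : E}
    (hf : ConvexOn ℝ s f) (hx : x ∈ s) (hy : y ∈ s) (hg : HasGradientAt f g x) :
    ⟪g, y - x⟫_ℝ ≤ f y - f x := by
  have hslope := (hf.comp_affineMap (AffineMap.lineMap x y)).le_slope_of_hasDerivAt
    (x := 0) (y := 1) (by simpa using hx) (by simpa using hy) one_pos
    ((by simpa using hg : HasGradientAt f g _).comp_hasDerivAt AffineMap.hasDerivAt_lineMap)
  simpa [slope_def_field] using hslope

noncomputable def gradientFlowLyapunov (f : E → ℝ) (a : ℝ → E) (x : E) (t : ℝ) : ℝ :=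
  t * (f (a t) - f x) + ‖a t - x‖ ^ 2 / 2

section GradientFlow

variable {f : E → ℝ} {a : ℝ → E} (x : E)

theorem hasDerivAt_gradientFlowLyapunov (hf : Differentiable ℝ f)
    (hflow : ∀ t, HasDerivAt a (-∇ f (a t)) t) (t : ℝ) :
    HasDerivAt (gradientFlowLyapunov f a x)
      (f (a t) - f x - ⟪∇ f (a t), a t - x⟫_ℝ - t * ‖∇ f (a t)‖ ^ 2) t := by
  have hfa := (hf (a t)).hasGradientAt.comp_hasDerivAt (hflow t)
  have hdist := ((hflow t).sub_const x).norm_sq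
  refine (((hasDerivAt_id' t).mul (hfa.sub_const (f x))).add (hdist.div_const 2)).congr_deriv ?_
  rw [inner_neg_right, inner_neg_right, real_inner_self_eq_norm_sq, real_inner_comm]
  ring

theorem antitoneOn_gradientFlowLyapunov (hconv : ConvexOn ℝ univ f) (hf : Differentiable ℝ f)
    (hflow : ∀ t, HasDerivAt a (-∇ f (a t)) t) :
    AntitoneOn (gradientFlowLyapunov f a x) (Ici 0) := by
  have hderiv := hasDerivAt_gradientFlowLyapunov x hf hflow
  refine antitoneOn_of_hasDerivWithinAt_nonpos (convex_Ici 0)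
    (fun t _ => (hderiv t).continuousAt.continuousWithinAt)
    (fun t _ => (hderiv t).hasDerivWithinAt) fun t ht => ?_
  have ht : 0 ≤ t := (interior_subset ht : t ∈ Ici 0)
  have hgrad := hconv.inner_sub_le_of_hasGradientAt (mem_univ (a t)) (mem_univ x)
    (hf (a t)).hasGradientAt
  rw [← neg_sub (a t) x, inner_neg_right] at hgrad
  linarith [mul_nonneg ht (sq_nonneg ‖∇ f (a t)‖)]

theorem norm_sub_sq_le_of_gradientFlow (hconv : ConvexOn ℝ univ f) (hf : Differentiable ℝ f)
    (hf_nonneg : ∀ y, 0 ≤ f y) (hflow : ∀ t, HasDerivAt a (-∇ f (a t)) t) {t : ℝ} (ht : 0 ≤ t) :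
    ‖a t - x‖ ^ 2 ≤ 2 * t * f x + ‖a 0 - x‖ ^ 2 := by
  have hJ := antitoneOn_gradientFlowLyapunov x hconv hf hflow self_mem_Ici ht ht
  simp only [gradientFlowLyapunov, zero_mul, zero_add] at hJ
  linarith [mul_nonneg ht (hf_nonneg (a t))]

end GradientFlow

/-- Drift bound for gradient flow on a convex nonnegative function:
`‖a(t) - a*‖² ≤ 2 t F(a*) + ‖a(0) - a*‖²`. -/
theorem stmt_10 {m : ℕ} (F : EuclideanSpace ℝ (Fin m) → ℝ)
    (hF : ConvexOn ℝ Set.univ F) (hFd : Differentiable ℝ F)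
    (hFpos : ∀ x, 0 ≤ F x)
    (astar : EuclideanSpace ℝ (Fin m)) (a : ℝ → EuclideanSpace ℝ (Fin m))
    (hflow : ∀ t, HasDerivAt a (-(gradient F (a t))) t) :
    ∀ t, 0 ≤ t → ‖a t - astar‖ ^ 2 ≤ 2 * t * F astar + ‖a 0 - astar‖ ^ 2 :=
  fun _ ht => norm_sub_sq_le_of_gradientFlow (x := astar) hF hFd hFpos hflow ht
end

section
/- Let a, a' : [0,T] → ℝ and b, b' : [0,T] → ℝ be absolutely continuous with |a'(t)| ≤ L·|b(t)|, |b'(t)| ≤ L·|a(t)|, |a(0)| = c/m, |b(0)| = 1 (L, c, m > 0). Then |a(t)| ≤ cosh(Lt)·(c/m) + sinh(Lt) and |b(t)| ≤ sinh(Lt)·(c/m) + cosh(Lt) for all t ∈ [0,T]. -/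
/-!
Compare `(‖a‖, ‖b‖)` with the solution `(φ, ψ)` of the comparison system `φ' = L ψ`, `ψ' = L φ`
with the same initial values, namely `φ = cosh (L t) (c/m) + sinh (L t)` and
`ψ = sinh (L t) (c/m) + cosh (L t)`. The excess `g = max (‖a‖ - φ) (‖b‖ - ψ)` has upper right
Dini derivative at most `L g`, because `‖a'‖ - L ψ ≤ L (‖b‖ - ψ)` and `‖b'‖ - L φ ≤ L (‖a‖ - φ)`;
as `g 0 ≤ 0`, Grönwall's inequality gives `g ≤ 0`.
-/

open Set Filter Topology Real

variable {E F : Type*} [NormedAddCommGroup E] [NormedSpace ℝ E]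
  [NormedAddCommGroup F] [NormedSpace ℝ F]

theorem HasDerivWithinAt.eventually_slope_norm_sub_lt {a : ℝ → E} {φ : ℝ → ℝ} {a' : E}
    {φ' x r : ℝ} (ha : HasDerivWithinAt a a' (Ioi x) x) (hφ : HasDerivWithinAt φ φ' (Ioi x) x)
    (hr : ‖a'‖ - φ' < r) : ∀ᶠ z in 𝓝[>] x, slope (fun t ↦ ‖a t‖ - φ t) x z < r := by
  obtain ⟨r₁, ha'r₁, hr₁⟩ := exists_between (show ‖a'‖ < r + φ' by linarith)
  have hnorm := ha.limsup_slope_norm_le ha'r₁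
  have hφslope : ∀ᶠ z in 𝓝[>] x, r₁ - r < slope φ x z :=
    (hasDerivWithinAt_iff_tendsto_slope' self_notMem_Ioi).1 hφ |>.eventually
      (lt_mem_nhds (by linarith))
  filter_upwards [hnorm, hφslope, self_mem_nhdsWithin] with z hz hφz (hxz : x < z)
  rw [Real.norm_of_nonneg (sub_pos.2 hxz).le] at hz
  rw [slope_def_field] at hφz ⊢
  rw [sub_sub_sub_comm, sub_div, div_eq_inv_mul]
  linarith

theorem eventually_slope_max_lt {f g : ℝ → ℝ} {x r : ℝ} (hf : ∀ᶠ z in 𝓝[>] x, slope f x z < r)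
    (hg : ∀ᶠ z in 𝓝[>] x, slope g x z < r) :
    ∀ᶠ z in 𝓝[>] x, slope (fun t ↦ max (f t) (g t)) x z < r := by
  filter_upwards [hf, hg, self_mem_nhdsWithin] with z hfz hgz (hxz : x < z)
  rw [slope_def_field] at hfz hgz ⊢
  calc (max (f z) (g z) - max (f x) (g x)) / (z - x)
      ≤ max (f z - f x) (g z - g x) / (z - x) :=
        div_le_div_of_nonneg_right (max_sub_max_le_max _ _ _ _) (sub_pos.2 hxz).le
    _ < r := by rw [← max_div_div_right (sub_pos.2 hxz).le]; exact max_lt hfz hgz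

theorem norm_le_of_norm_deriv_le_coupled {a a' : ℝ → E} {b b' : ℝ → F} {φ ψ : ℝ → ℝ}
    {L t₀ T : ℝ} (hL : 0 ≤ L)
    (ha : ∀ t ∈ Icc t₀ T, HasDerivAt a (a' t) t) (hb : ∀ t ∈ Icc t₀ T, HasDerivAt b (b' t) t)
    (ha' : ∀ t ∈ Icc t₀ T, ‖a' t‖ ≤ L * ‖b t‖) (hb' : ∀ t ∈ Icc t₀ T, ‖b' t‖ ≤ L * ‖a t‖)
    (hφ : ∀ t ∈ Icc t₀ T, HasDerivAt φ (L * ψ t) t)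
    (hψ : ∀ t ∈ Icc t₀ T, HasDerivAt ψ (L * φ t) t)
    (ha₀ : ‖a t₀‖ ≤ φ t₀) (hb₀ : ‖b t₀‖ ≤ ψ t₀) :
    ∀ t ∈ Icc t₀ T, ‖a t‖ ≤ φ t ∧ ‖b t‖ ≤ ψ t := by
  set g : ℝ → ℝ := fun t ↦ max (‖a t‖ - φ t) (‖b t‖ - ψ t)
  have hg : ContinuousOn g (Icc t₀ T) := fun t ht ↦ ContinuousAt.continuousWithinAt <|
    ((ha t ht).continuousAt.norm.sub (hφ t ht).continuousAt).max
      ((hb t ht).continuousAt.norm.sub (hψ t ht).continuousAt)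
  have hg' : ∀ x ∈ Ico t₀ T, ∀ r, L * g x < r →
      ∃ᶠ z in 𝓝[>] x, (z - x)⁻¹ * (g z - g x) < r := by
    intro x hx r hr
    have hx' := Ico_subset_Icc_self hx
    have hA : ‖a' x‖ - L * ψ x < r := calc
      ‖a' x‖ - L * ψ x ≤ L * (‖b x‖ - ψ x) := by linarith [ha' x hx']
      _ ≤ L * g x := mul_le_mul_of_nonneg_left (le_max_right _ _) hL
      _ < r := hr
    have hB : ‖b' x‖ - L * φ x < r := calc
      ‖b' x‖ - L * φ x ≤ L * (‖a x‖ - φ x) := by linarith [hb' x hx']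
      _ ≤ L * g x := mul_le_mul_of_nonneg_left (le_max_left _ _) hL
      _ < r := hr
    exact (eventually_slope_max_lt
      ((ha x hx').hasDerivWithinAt.eventually_slope_norm_sub_lt (hφ x hx').hasDerivWithinAt hA)
      ((hb x hx').hasDerivWithinAt.eventually_slope_norm_sub_lt (hψ x hx').hasDerivWithinAt hB)
      ).frequently
  have hg₀ : g t₀ ≤ 0 := max_le (sub_nonpos.2 ha₀) (sub_nonpos.2 hb₀)
  intro t ht
  have hgt : g t ≤ 0 := by
    simpa only [gronwallBound_ε0_δ0] using le_gronwallBound_of_liminf_deriv_right_le hg hg' hg₀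
      (fun x _ ↦ (add_zero _).ge) t ht
  exact ⟨sub_nonpos.1 ((le_max_left _ _).trans hgt), sub_nonpos.1 ((le_max_right _ _).trans hgt)⟩

theorem hasDerivAt_cosh_mul_mul_add_sinh_mul (L p t : ℝ) :
    HasDerivAt (fun s ↦ cosh (L * s) * p + sinh (L * s))
      (L * (sinh (L * t) * p + cosh (L * t))) t := by
  have hLt : HasDerivAt (fun s ↦ L * s) L t := hasDerivAt_const_mul L
  exact ((hLt.cosh.mul_const p).add hLt.sinh).congr_deriv (by ring)

theorem hasDerivAt_sinh_mul_mul_add_cosh_mul (L p t : ℝ) :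
    HasDerivAt (fun s ↦ sinh (L * s) * p + cosh (L * s))
      (L * (cosh (L * t) * p + sinh (L * t))) t := by
  have hLt : HasDerivAt (fun s ↦ L * s) L t := hasDerivAt_const_mul L
  exact ((hLt.sinh.mul_const p).add hLt.cosh).congr_deriv (by ring)

theorem stmt_11_general (T L c m : ℝ) (hL : 0 < L)
    (a b a' b' : ℝ → ℝ)
    (ha : ∀ t ∈ Set.Icc (0 : ℝ) T, HasDerivAt a (a' t) t)
    (hb : ∀ t ∈ Set.Icc (0 : ℝ) T, HasDerivAt b (b' t) t)
    (ha' : ∀ t ∈ Set.Icc (0 : ℝ) T, |a' t| ≤ L * |b t|)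
    (hb' : ∀ t ∈ Set.Icc (0 : ℝ) T, |b' t| ≤ L * |a t|)
    (ha0 : |a 0| = c / m) (hb0 : |b 0| = 1) :
    ∀ t ∈ Set.Icc (0 : ℝ) T,
      |a t| ≤ Real.cosh (L * t) * (c / m) + Real.sinh (L * t) ∧
      |b t| ≤ Real.sinh (L * t) * (c / m) + Real.cosh (L * t) :=
  norm_le_of_norm_deriv_le_coupled hL.le ha hb ha' hb'
    (fun t _ ↦ hasDerivAt_cosh_mul_mul_add_sinh_mul L (c / m) t)
    (fun t _ ↦ hasDerivAt_sinh_mul_mul_add_cosh_mul L (c / m) t)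
    (by simp [ha0]) (by simp [hb0])

/-- Coupled Grönwall bound: if `|a'| ≤ L|b|`, `|b'| ≤ L|a|`, `|a 0| = c/m`, `|b 0| = 1`,
then `|a t| ≤ cosh(Lt) c/m + sinh(Lt)` and `|b t| ≤ sinh(Lt) c/m + cosh(Lt)` on `[0,T]`. -/
theorem stmt_11 (T L c m : ℝ) (hL : 0 < L) (hc : 0 < c) (hm : 0 < m)
    (a b a' b' : ℝ → ℝ)
    (ha : ∀ t ∈ Set.Icc (0 : ℝ) T, HasDerivAt a (a' t) t)
    (hb : ∀ t ∈ Set.Icc (0 : ℝ) T, HasDerivAt b (b' t) t)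
    (ha' : ∀ t ∈ Set.Icc (0 : ℝ) T, |a' t| ≤ L * |b t|)
    (hb' : ∀ t ∈ Set.Icc (0 : ℝ) T, |b' t| ≤ L * |a t|)
    (ha0 : |a 0| = c / m) (hb0 : |b 0| = 1) :
    ∀ t ∈ Set.Icc (0 : ℝ) T,
      |a t| ≤ Real.cosh (L * t) * (c / m) + Real.sinh (L * t) ∧
      |b t| ≤ Real.sinh (L * t) * (c / m) + Real.cosh (L * t) :=
  stmt_11_general T L c m hL a b a' b' ha hb ha' hb' ha0 hb0
end
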